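/- Triviality of the kernel of the implicit step: let 1 < α ≤ 2, h > 0, M ≥ 2, υ > 0, let η, κ, ζ, δ, β, γ be real constants, let C* ≥ 0, and let τ satisfy 0 < τ < 1/(|γ| + (|κ| + |δ|)C*²). Let U, V : {0,…,M} → ℂ be grid functions with |U_j| ≤ C* and |V_j| ≤ C* for all j. If W ∈ Z_h^0 satisfies, for every 1 ≤ j ≤ M-1, (1/(2τ))W_j + ((υ + iη)/2)(Δ_h^α W)_j + (1/2)((κ + iζ)|U_j|² + (δ + iβ)|V_j|²)W_j - (γ/2)W_j = 0, then W_j = 0 for all j. -/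

import Mathlib

/-- The fractional centered difference coefficients
`c_k^α = (-1)^k Γ(α+1) / (Γ(α/2 - k + 1) Γ(α/2 + k + 1))`. -/
noncomputable def fracCoef (α : ℝ) (k : ℤ) : ℝ :=
  (-1 : ℝ) ^ k * Real.Gamma (α + 1) /
    (Real.Gamma (α / 2 - k + 1) * Real.Gamma (α / 2 + k + 1))

/-- Fractional centered difference operator on grid functions vanishing at `0` and `M`:
`(Δ_h^α W)_j = h^{-α} Σ_{k=1}^{M-1} c_{j-k}^α W_k`. -/
noncomputable def fracDiffGrid (α h : ℝ) (M : ℕ) (W : ℕ → ℂ) (j : ℕ) : ℂ :=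
  ((h ^ (-α) : ℝ) : ℂ) *
    ∑ k ∈ Finset.Icc 1 (M - 1), (fracCoef α ((j : ℤ) - (k : ℤ)) : ℂ) * W k



lemma fracCoef_rec (α : ℝ) (hα : 0 < α) (k : ℕ) :
    (α / 2 + k + 1) * fracCoef α ((k : ℤ) + 1) = ((k : ℝ) - α / 2) * fracCoef α (k : ℤ) := by
  have hs : (0:ℝ) < α / 2 + k + 1 := by positivity
  have hB : (0:ℝ) < Real.Gamma (α / 2 + k + 1) := Real.Gamma_pos_of_pos (by positivity)
  unfold fracCoef
  rw [show α / 2 - ((k:ℤ)+1 : ℤ) + 1 = α/2 - k by push_cast; ring,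
      show α / 2 + ((k:ℤ)+1 : ℤ) + 1 = (α/2 + k + 1) + 1 by push_cast; ring,
      Real.Gamma_add_one hs.ne']
  rw [zpow_add₀ (by norm_num : (-1:ℝ) ≠ 0), zpow_one]
  push_cast
  rcases eq_or_ne (Real.Gamma (α/2 - k)) 0 with hA | hA
  · rcases eq_or_ne (α/2 - (k:ℝ)) 0 with ht | ht
    · simp [hA, show (k:ℝ) - α/2 = 0 from by linarith [sub_eq_zero.mp ht]]
    · have h2 : Real.Gamma (α/2 - (k:ℝ) + 1) = 0 := by
        rw [Real.Gamma_add_one ht, hA, mul_zero]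
      simp [hA, h2]
  · have ht : α/2 - (k:ℝ) ≠ 0 := by
      intro h; rw [h] at hA; exact hA Real.Gamma_zero
    have h2 : Real.Gamma (α/2 - (k:ℝ) + 1) = (α/2 - k) * Real.Gamma (α/2 - k) :=
      Real.Gamma_add_one ht
    rw [h2, mul_div_assoc', mul_div_assoc', div_eq_div_iff
      (mul_ne_zero hA (mul_ne_zero hs.ne' hB.ne'))
      (mul_ne_zero (mul_ne_zero ht hA) hB.ne')]
    ring

lemma fracCoef_zero_pos (α : ℝ) (hα : 0 < α) : 0 < fracCoef α 0 := by
  unfold fracCoef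
  simp only [Int.cast_zero, sub_zero, add_zero, zpow_zero, one_mul]
  exact div_pos (Real.Gamma_pos_of_pos (by linarith))
    (mul_pos (Real.Gamma_pos_of_pos (by linarith)) (Real.Gamma_pos_of_pos (by linarith)))

lemma fracCoef_succ_nonpos (α : ℝ) (hα1 : 1 < α) (hα2 : α ≤ 2) (k : ℕ) :
    fracCoef α ((k : ℤ) + 1) ≤ 0 := by
  have hα : (0:ℝ) < α := by linarith
  induction k with
  | zero =>
    have h := fracCoef_rec α hα 0
    have h0 := fracCoef_zero_pos α hα
    norm_num at h ⊢
    nlinarith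
  | succ n ih =>
    have h := fracCoef_rec α hα (n+1)
    have hs : (0:ℝ) < α/2 + (n+1:ℕ) + 1 := by positivity
    have hn : (0:ℝ) ≤ ((n+1:ℕ):ℝ) - α/2 := by push_cast; linarith
    push_cast at h hs hn ⊢
    nlinarith

lemma fracCoef_neg_eq (α : ℝ) (m : ℤ) : fracCoef α (-m) = fracCoef α m := by
  unfold fracCoef
  have h1 : ((-1:ℝ)) ^ (-m) = (-1) ^ m := by
    rw [zpow_neg]
    refine inv_eq_of_mul_eq_one_left ?_
    rw [← zpow_add₀ (by norm_num : (-1:ℝ) ≠ 0)]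
    rw [show m + m = 2 * m by ring, zpow_mul]
    norm_num
  rw [h1, show α / 2 - (-m : ℤ) + 1 = α / 2 + m + 1 by push_cast; ring,
      show α / 2 + (-m : ℤ) + 1 = α / 2 - m + 1 by push_cast; ring,
      mul_comm (Real.Gamma (α / 2 + (m:ℝ) + 1))]

lemma fracCoef_nonpos_of_ne (α : ℝ) (hα1 : 1 < α) (hα2 : α ≤ 2) (m : ℤ) (hm : m ≠ 0) :
    fracCoef α m ≤ 0 := by
  rcases Int.lt_or_lt_of_ne hm with h | h
  · obtain ⟨n, hn⟩ : ∃ n : ℕ, m = -((n:ℤ)+1) := ⟨(-m-1).toNat, by omega⟩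
    rw [hn, fracCoef_neg_eq]
    exact fracCoef_succ_nonpos α hα1 hα2 n
  · obtain ⟨n, hn⟩ : ∃ n : ℕ, m = (n:ℤ)+1 := ⟨(m-1).toNat, by omega⟩
    rw [hn]
    exact fracCoef_succ_nonpos α hα1 hα2 n

lemma fracCoef_partial_sum (α : ℝ) (hα : 0 < α) (n : ℕ) :
    α * (fracCoef α 0 + 2 * ∑ k ∈ Finset.Icc 1 n, fracCoef α (k : ℤ)) =
      -2 * ((n:ℝ) + 1 + α/2) * fracCoef α ((n:ℤ) + 1) := by
  induction n with
  | zero =>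
    simp only [Finset.Icc_eq_empty_of_lt (by norm_num : (0:ℕ) < 1), Finset.sum_empty,
      mul_zero, add_zero, Nat.cast_zero]
    have h := fracCoef_rec α hα 0
    push_cast at h ⊢
    linarith [h]
  | succ n ih =>
    rw [Finset.sum_Icc_succ_top (by omega : 1 ≤ n + 1)]
    have h := fracCoef_rec α hα (n+1)
    push_cast at h ih ⊢
    nlinarith [h, ih]

lemma fracCoef_head_sum_nonneg (α : ℝ) (hα1 : 1 < α) (hα2 : α ≤ 2) (n : ℕ) :
    0 ≤ fracCoef α 0 + 2 * ∑ k ∈ Finset.Icc 1 n, fracCoef α (k : ℤ) := by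
  have hα : (0:ℝ) < α := by linarith
  have h := fracCoef_partial_sum α hα n
  have h2 := fracCoef_succ_nonpos α hα1 hα2 n
  have hn : (0:ℝ) < (n:ℝ) + 1 + α/2 := by positivity
  nlinarith

lemma fracCoef_row_sum_nonneg (α : ℝ) (hα1 : 1 < α) (hα2 : α ≤ 2) (N j : ℕ)
    (hj1 : 1 ≤ j) (hj2 : j ≤ N) :
    0 ≤ ∑ k ∈ Finset.Icc 1 N, fracCoef α ((j:ℤ) - (k:ℤ)) := by
  have hIoc : ∀ P : ℕ, Finset.Icc 1 P = Finset.Ioc 0 P := fun P => Finset.Icc_add_one_left_eq_Ioc 0 P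
  rw [hIoc]
  have hsplit := Finset.sum_Ioc_consecutive (fun k : ℕ => fracCoef α ((j:ℤ) - (k:ℤ)))
    (Nat.zero_le j) hj2
  rw [← hsplit]
  have hj' : j = (j - 1) + 1 := by omega
  have htop : ∑ k ∈ Finset.Ioc 0 j, fracCoef α ((j:ℤ) - (k:ℤ))
      = (∑ k ∈ Finset.Ioc 0 (j-1), fracCoef α ((j:ℤ) - (k:ℤ))) + fracCoef α 0 := by
    have h := Finset.sum_Ioc_succ_top (Nat.zero_le (j-1))
      (fun k : ℕ => fracCoef α ((j:ℤ) - (k:ℤ)))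
    rw [show j - 1 + 1 = j from by omega] at h
    rw [h]
    norm_num
  have h1 : ∑ k ∈ Finset.Ioc 0 (j-1), fracCoef α ((j:ℤ) - (k:ℤ))
      = ∑ m ∈ Finset.Ioc 0 (j-1), fracCoef α (m:ℤ) := by
    apply Finset.sum_bij' (fun k _ => j - k) (fun m _ => j - m)
    · intro a ha; simp only [Finset.mem_Ioc] at ha ⊢; omega
    · intro a ha; simp only [Finset.mem_Ioc] at ha ⊢; omega
    · intro a ha; simp only [Finset.mem_Ioc] at ha; omega
    · intro a ha; simp only [Finset.mem_Ioc] at ha; omega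
    · intro a ha
      simp only [Finset.mem_Ioc] at ha
      congr 1
      have : (↑(j - a) : ℤ) = (j:ℤ) - a := by omega
      omega
  have h2 : ∑ k ∈ Finset.Ioc j N, fracCoef α ((j:ℤ) - (k:ℤ))
      = ∑ m ∈ Finset.Ioc 0 (N-j), fracCoef α (m:ℤ) := by
    apply Finset.sum_bij' (fun k _ => k - j) (fun m _ => m + j)
    · intro a ha; simp only [Finset.mem_Ioc] at ha ⊢; omega
    · intro a ha; simp only [Finset.mem_Ioc] at ha ⊢; omega
    · intro a ha; simp only [Finset.mem_Ioc] at ha; omega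
    · intro a ha; simp only [Finset.mem_Ioc] at ha; omega
    · intro a ha
      simp only [Finset.mem_Ioc] at ha
      rw [show ((j:ℤ) - (a:ℤ)) = -((a - j : ℕ) : ℤ) by omega, fracCoef_neg_eq]
  rw [htop, h1, h2]
  have hmono : ∀ P : ℕ, P ≤ N →
      ∑ m ∈ Finset.Ioc 0 N, fracCoef α (m:ℤ) ≤ ∑ m ∈ Finset.Ioc 0 P, fracCoef α (m:ℤ) := by
    intro P hP
    have hsub : Finset.Ioc 0 P ⊆ Finset.Ioc 0 N := Finset.Ioc_subset_Ioc le_rfl hP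
    have h := Finset.sum_le_sum_of_subset_of_nonneg (f := fun m : ℕ => -fracCoef α (m:ℤ)) hsub
      (fun i hi _ => neg_nonneg.mpr (fracCoef_nonpos_of_ne α hα1 hα2 i
        (Int.natCast_ne_zero.mpr (by simp only [Finset.mem_Ioc] at hi; omega))))
    simp only [Finset.sum_neg_distrib] at h
    linarith
  have hA := hmono (j-1) (by omega)
  have hB := hmono (N-j) (by omega)
  have hhead := fracCoef_head_sum_nonneg α hα1 hα2 N
  rw [hIoc] at hhead
  linarith

open Finset in
lemma quad_im_zero (α : ℝ) (N : ℕ) (W : ℕ → ℂ) :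
    ∑ j ∈ Icc 1 N, ∑ k ∈ Icc 1 N,
      fracCoef α ((j:ℤ) - (k:ℤ)) * (W k * (starRingEnd ℂ) (W j)).im = 0 := by
  set s := Icc 1 N
  set f : ℕ → ℕ → ℝ := fun j k => fracCoef α ((j:ℤ) - (k:ℤ)) * (W k * (starRingEnd ℂ) (W j)).im with hf
  have hanti : ∀ a b : ℕ, f b a = - f a b := by
    intro a b
    simp only [hf]
    rw [show (b:ℤ) - a = -((a:ℤ) - b) by ring, fracCoef_neg_eq]
    have : W a * (starRingEnd ℂ) (W b) = (starRingEnd ℂ) (W b * (starRingEnd ℂ) (W a)) := by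
      rw [map_mul, Complex.conj_conj]
      ring
    rw [this, Complex.conj_im]
    ring
  have hcomm : ∑ j ∈ s, ∑ k ∈ s, f j k = ∑ j ∈ s, ∑ k ∈ s, f k j := Finset.sum_comm
  have : ∑ j ∈ s, ∑ k ∈ s, f j k = - ∑ j ∈ s, ∑ k ∈ s, f j k := by
    nth_rewrite 1 [hcomm]
    rw [← Finset.sum_neg_distrib]
    exact Finset.sum_congr rfl fun a _ => by
      rw [← Finset.sum_neg_distrib]
      exact Finset.sum_congr rfl fun b _ => hanti a b
  linarith

open Finset in
lemma quad_re_nonneg (α : ℝ) (hα1 : 1 < α) (hα2 : α ≤ 2) (N : ℕ) (W : ℕ → ℂ) :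
    0 ≤ ∑ j ∈ Icc 1 N, ∑ k ∈ Icc 1 N,
      fracCoef α ((j:ℤ) - (k:ℤ)) * (W k * (starRingEnd ℂ) (W j)).re := by
  set s := Icc 1 N with hs
  have key : ∀ j ∈ s, ∀ k ∈ s,
      fracCoef α ((j:ℤ) - (k:ℤ)) * ((‖W j‖^2 + ‖W k‖^2)/2)
        ≤ fracCoef α ((j:ℤ) - (k:ℤ)) * (W k * (starRingEnd ℂ) (W j)).re := by
    intro j _ k _
    rcases eq_or_ne j k with rfl | hne
    · apply le_of_eq
      congr 1
      rw [Complex.mul_conj, Complex.ofReal_re, Complex.normSq_eq_norm_sq]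
      ring
    · have hc : fracCoef α ((j:ℤ) - (k:ℤ)) ≤ 0 :=
        fracCoef_nonpos_of_ne α hα1 hα2 _ (by omega)
      apply mul_le_mul_of_nonpos_left _ hc
      have h1 : (W k * (starRingEnd ℂ) (W j)).re ≤ ‖W k * (starRingEnd ℂ) (W j)‖ :=
        Complex.re_le_norm _
      rw [norm_mul, RCLike.norm_conj] at h1
      nlinarith [sq_nonneg (‖W k‖ - ‖W j‖), norm_nonneg (W k), norm_nonneg (W j)]
  have step1 : 0 ≤ ∑ j ∈ s, ∑ k ∈ s,
      fracCoef α ((j:ℤ) - (k:ℤ)) * ((‖W j‖^2 + ‖W k‖^2)/2) := by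
    have hswap : ∑ j ∈ s, ∑ k ∈ s, fracCoef α ((j:ℤ) - (k:ℤ)) * ‖W k‖^2
        = ∑ j ∈ s, ∑ k ∈ s, fracCoef α ((j:ℤ) - (k:ℤ)) * ‖W j‖^2 := by
      rw [Finset.sum_comm]
      refine Finset.sum_congr rfl fun a _ => Finset.sum_congr rfl fun b _ => ?_
      rw [show (b:ℤ) - a = -((a:ℤ) - b) by ring, fracCoef_neg_eq]
    have expand : ∑ j ∈ s, ∑ k ∈ s, fracCoef α ((j:ℤ) - (k:ℤ)) * ((‖W j‖^2 + ‖W k‖^2)/2)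
        = (∑ j ∈ s, ∑ k ∈ s, fracCoef α ((j:ℤ) - (k:ℤ)) * ‖W j‖^2) / 2
          + (∑ j ∈ s, ∑ k ∈ s, fracCoef α ((j:ℤ) - (k:ℤ)) * ‖W k‖^2) / 2 := by
      rw [Finset.sum_div, Finset.sum_div, ← Finset.sum_add_distrib]
      refine Finset.sum_congr rfl fun a _ => ?_
      rw [Finset.sum_div, Finset.sum_div, ← Finset.sum_add_distrib]
      exact Finset.sum_congr rfl fun b _ => by ring
    rw [expand, hswap]
    have hrow : 0 ≤ ∑ j ∈ s, ∑ k ∈ s, fracCoef α ((j:ℤ) - (k:ℤ)) * ‖W j‖^2 := by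
      apply Finset.sum_nonneg
      intro j hj
      rw [← Finset.sum_mul]
      apply mul_nonneg _ (sq_nonneg _)
      simp only [hs, Finset.mem_Icc] at hj
      exact fracCoef_row_sum_nonneg α hα1 hα2 N j hj.1 hj.2
    linarith
  calc (0:ℝ) ≤ _ := step1
    _ ≤ _ := Finset.sum_le_sum fun j hj => Finset.sum_le_sum fun k hk => key j hj k hk

set_option maxHeartbeats 1000000 in
/-- Triviality of the kernel of the implicit step of the linearized scheme: for
`0 < τ < 1/(|γ| + (|κ| + |δ|)C*²)` (encoded as `τ(|γ| + (|κ| + |δ|)C*²) < 1`), the only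
`W ∈ Z_h^0` with
`W_j/(2τ) + ((υ+iη)/2)(Δ_h^α W)_j + (1/2)((κ+iζ)|U_j|² + (δ+iβ)|V_j|²)W_j - (γ/2)W_j = 0`
for `1 ≤ j ≤ M-1` is `W = 0`. -/
theorem implicit_step_kernel_trivial (α h τ : ℝ) (M : ℕ)
    (hα1 : 1 < α) (hα2 : α ≤ 2) (hh : 0 < h) (hM : 2 ≤ M)
    (υ η κ ζ δ β γ Cstar : ℝ) (hυ : 0 < υ) (hC : 0 ≤ Cstar)
    (hτ : 0 < τ) (hτ1 : τ * (|γ| + (|κ| + |δ|) * Cstar ^ 2) < 1)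
    (U V W : ℕ → ℂ)
    (hU : ∀ j ≤ M, ‖U j‖ ≤ Cstar) (hV : ∀ j ≤ M, ‖V j‖ ≤ Cstar)
    (hW0 : W 0 = 0) (hWM : W M = 0)
    (heq : ∀ j, 1 ≤ j → j ≤ M - 1 →
      (1 / (2 * (τ : ℂ))) * W j
        + ((↑υ + Complex.I * ↑η) / 2) * fracDiffGrid α h M W j
        + (1 / 2 : ℂ) * ((↑κ + Complex.I * ↑ζ) * (‖U j‖ : ℂ) ^ 2
            + (↑δ + Complex.I * ↑β) * (‖V j‖ : ℂ) ^ 2) * W j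
        - (↑γ / 2) * W j = 0) :
    ∀ j ≤ M, W j = 0 := by
  classical
  set s : Finset ℕ := Finset.Icc 1 (M - 1) with hs
  set H : ℝ := h ^ (-α) with hH
  have hHpos : 0 < H := Real.rpow_pos_of_pos hh _
  set x : ℕ → ℝ := fun j => ‖W j‖ ^ 2 with hx
  set u : ℕ → ℝ := fun j => ‖U j‖ ^ 2 with hu
  set v : ℕ → ℝ := fun j => ‖V j‖ ^ 2 with hv
  set T : ℕ → ℂ := fun j => ∑ k ∈ s, (fracCoef α ((j:ℤ) - (k:ℤ)) : ℂ)
      * (W k * (starRingEnd ℂ) (W j)) with hT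
  have hτC : (τ:ℂ) ≠ 0 := Complex.ofReal_ne_zero.mpr hτ.ne'
  have hWc : ∀ j : ℕ, W j * (starRingEnd ℂ) (W j) = ((x j : ℝ) : ℂ) := by
    intro j
    rw [Complex.mul_conj, Complex.normSq_eq_norm_sq]
  -- per-j real identity
  have E : ∀ j ∈ s, x j * (1 + τ*(κ * u j + δ * v j - γ))
      + τ*υ*H*(T j).re - τ*η*H*(T j).im = 0 := by
    intro j hj
    rw [hs, Finset.mem_Icc] at hj
    have hje := heq j hj.1 hj.2
    have hje2 : W j + ↑τ*(↑υ + Complex.I*↑η) * fracDiffGrid α h M W j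
        + ↑τ*((↑κ + Complex.I*↑ζ) * ((u j : ℝ):ℂ) + (↑δ + Complex.I*↑β) * ((v j : ℝ):ℂ)) * W j
        - ↑τ*↑γ*W j = 0 := by
      have h2 : (2*(τ:ℂ)) * ((1 / (2 * (τ : ℂ))) * W j
        + ((↑υ + Complex.I * ↑η) / 2) * fracDiffGrid α h M W j
        + (1 / 2 : ℂ) * ((↑κ + Complex.I * ↑ζ) * (‖U j‖ : ℂ) ^ 2
            + (↑δ + Complex.I * ↑β) * (‖V j‖ : ℂ) ^ 2) * W j
        - (↑γ / 2) * W j) = 0 := by rw [hje, mul_zero]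
      have hinv : (2*(τ:ℂ)) * (1/(2*(τ:ℂ))) = 1 := by field_simp
      simp only [hu, hv]
      push_cast
      linear_combination (2*(τ:ℂ)) * hje - W j * hinv
    have hDval : fracDiffGrid α h M W j * (starRingEnd ℂ) (W j) = (H:ℂ) * T j := by
      rw [fracDiffGrid, hT, mul_assoc, Finset.sum_mul]
      congr 1
      exact Finset.sum_congr rfl fun k _ => by ring
    have h4 : (W j + ↑τ*(↑υ + Complex.I*↑η) * fracDiffGrid α h M W j
        + ↑τ*((↑κ + Complex.I*↑ζ) * ((u j : ℝ):ℂ) + (↑δ + Complex.I*↑β) * ((v j : ℝ):ℂ)) * W j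
        - ↑τ*↑γ*W j) * (starRingEnd ℂ) (W j) = 0 := by rw [hje2, zero_mul]
    have h3 : ((x j : ℝ):ℂ) + ↑τ*(↑υ + Complex.I*↑η)*((H:ℂ) * T j)
        + ↑τ*((↑κ + Complex.I*↑ζ) * ((u j : ℝ):ℂ) + (↑δ + Complex.I*↑β) * ((v j : ℝ):ℂ)) * ((x j : ℝ):ℂ)
        - ↑τ*↑γ*((x j : ℝ):ℂ) = 0 := by
      rw [← h4]
      linear_combination (-(↑τ*(↑υ + Complex.I*↑η))) * hDval
        - (1 + ↑τ*((↑κ + Complex.I*↑ζ) * ((u j : ℝ):ℂ) + (↑δ + Complex.I*↑β) * ((v j : ℝ):ℂ)) - ↑τ*↑γ) * hWc j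
    have h5 := congrArg Complex.re h3
    simp only [Complex.add_re, Complex.sub_re, Complex.mul_re, Complex.mul_im,
      Complex.add_im, Complex.sub_im, Complex.ofReal_re, Complex.ofReal_im,
      Complex.I_re, Complex.I_im, Complex.zero_re] at h5
    linear_combination h5
  -- sum up
  have hsum0 : ∑ j ∈ s, (x j * (1 + τ*(κ * u j + δ * v j - γ))
      + τ*υ*H*(T j).re - τ*η*H*(T j).im) = 0 :=
    Finset.sum_eq_zero E
  have hTre : ∀ j : ℕ, (T j).re = ∑ k ∈ s, fracCoef α ((j:ℤ) - (k:ℤ))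
      * (W k * (starRingEnd ℂ) (W j)).re := by
    intro j
    rw [hT]
    rw [Complex.re_sum]
    exact Finset.sum_congr rfl fun k _ => Complex.re_ofReal_mul _ _
  have hTim : ∀ j : ℕ, (T j).im = ∑ k ∈ s, fracCoef α ((j:ℤ) - (k:ℤ))
      * (W k * (starRingEnd ℂ) (W j)).im := by
    intro j
    rw [hT]
    rw [Complex.im_sum]
    exact Finset.sum_congr rfl fun k _ => Complex.im_ofReal_mul _ _
  have hsum1 : ∑ j ∈ s, x j * (1 + τ*(κ * u j + δ * v j - γ))
      = - (τ*υ*H * ∑ j ∈ s, (T j).re) + τ*η*H * ∑ j ∈ s, (T j).im := by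
    rw [Finset.mul_sum, Finset.mul_sum]
    rw [Finset.sum_sub_distrib, Finset.sum_add_distrib] at hsum0
    linarith [hsum0]
  have hQ : 0 ≤ ∑ j ∈ s, (T j).re := by
    rw [show ∑ j ∈ s, (T j).re = ∑ j ∈ s, ∑ k ∈ s, fracCoef α ((j:ℤ) - (k:ℤ))
      * (W k * (starRingEnd ℂ) (W j)).re from Finset.sum_congr rfl fun j _ => hTre j]
    exact quad_re_nonneg α hα1 hα2 (M-1) W
  have hZ : ∑ j ∈ s, (T j).im = 0 := by
    rw [show ∑ j ∈ s, (T j).im = ∑ j ∈ s, ∑ k ∈ s, fracCoef α ((j:ℤ) - (k:ℤ))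
      * (W k * (starRingEnd ℂ) (W j)).im from Finset.sum_congr rfl fun j _ => hTim j]
    exact quad_im_zero α (M-1) W
  have hle : ∑ j ∈ s, x j * (1 + τ*(κ * u j + δ * v j - γ)) ≤ 0 := by
    rw [hsum1, hZ, mul_zero, add_zero]
    have : 0 ≤ τ*υ*H * ∑ j ∈ s, (T j).re :=
      mul_nonneg (mul_nonneg (mul_nonneg hτ.le hυ.le) hHpos.le) hQ
    linarith
  -- positivity of coefficients
  have hcoef : ∀ j ∈ s, 0 < 1 + τ*(κ * u j + δ * v j - γ) := by
    intro j hj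
    rw [hs, Finset.mem_Icc] at hj
    have hjM : j ≤ M := by omega
    have hu1 : 0 ≤ u j := sq_nonneg _
    have hv1 : 0 ≤ v j := sq_nonneg _
    have hu2 : u j ≤ Cstar^2 := by
      have := hU j hjM
      have := norm_nonneg (U j)
      simp only [hu]; nlinarith
    have hv2 : v j ≤ Cstar^2 := by
      have := hV j hjM
      have := norm_nonneg (V j)
      simp only [hv]; nlinarith
    have h1 : κ * u j ≥ -(|κ| * Cstar^2) := by
      nlinarith [neg_abs_le κ, abs_nonneg κ]
    have h2 : δ * v j ≥ -(|δ| * Cstar^2) := by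
      nlinarith [neg_abs_le δ, abs_nonneg δ]
    have h3 : -γ ≥ -|γ| := by
      have := le_abs_self γ
      linarith
    nlinarith [hτ1, hτ]
  have hxz : ∀ j ∈ s, x j = 0 := by
    have hnn : ∀ j ∈ s, 0 ≤ x j * (1 + τ*(κ * u j + δ * v j - γ)) := by
      intro j hj
      exact mul_nonneg (sq_nonneg _) (hcoef j hj).le
    have hzero : ∑ j ∈ s, x j * (1 + τ*(κ * u j + δ * v j - γ)) = 0 :=
      le_antisymm hle (Finset.sum_nonneg hnn)
    intro j hj
    have := (Finset.sum_eq_zero_iff_of_nonneg hnn).mp hzero j hj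
    have hc := hcoef j hj
    rcases mul_eq_zero.mp this with h | h
    · exact h
    · linarith
  intro j hjM
  rcases Nat.eq_zero_or_pos j with rfl | hj0
  · exact hW0
  rcases eq_or_lt_of_le hjM with rfl | hjlt
  · exact hWM
  have hxj : x j = 0 := hxz j (by rw [hs, Finset.mem_Icc]; omega)
  have : ‖W j‖ = 0 := by
    simp only [hx] at hxj
    nlinarith [norm_nonneg (W j)]
  exact norm_eq_zero.mp this
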